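/- Let G be a group, ρ : G → S_n, ρ' : G → S_{n'} homomorphisms, M a G-module, β, β' G-module morphisms into (ℂ*)^n_ρ and (ℂ*)^{n'}_{ρ'}, α ∈ Z³(G, M), and c ∈ C²(G, (ℂ*)^n_ρ), c' ∈ C²(G, (ℂ*)^{n'}_{ρ'}) with ∂c = β∘α and ∂c' = β'∘α. Let 𝒪 be a G-orbit of intertwining points in {1,…,n'}×{1,…,n}. Then the function z_𝒪(g₁,g₂)(i',i) = c'(g₁,g₂)_{i'} / c(g₁,g₂)_{i} is a 2-cocycle in Z²(G, F(𝒪, ℂ*)), where F(𝒪, ℂ*) is the G-module of ℂ*-valued functions on 𝒪 with (g·λ)(i',i) = λ((i',i)·g). -/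
import Mathlib


open Equiv

/-- Given 2-cochains `c ∈ C²(G, ((ℂ*)^n)_ρ)` and `c' ∈ C²(G, ((ℂ*)^{n'})_{ρ'})` with
`∂c = β∘α` and `∂c' = β'∘α`, and a `G`-orbit `O` of intertwining points in
`{1,…,n'} × {1,…,n}`, the function `z_O(g₁,g₂)(i',i) = c'(g₁,g₂)_{i'} / c(g₁,g₂)_i` is a
2-cocycle of `G` with values in the `G`-module of `ℂ*`-valued functions on `O`. -/
theorem stmt17 {G M : Type*} [Group G] [CommGroup M] [MulDistribMulAction G M]
    {n n' : ℕ} (ρ : G →* Perm (Fin n)) (ρ' : G →* Perm (Fin n'))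
    (β : M →* (Fin n → ℂˣ)) (β' : M →* (Fin n' → ℂˣ))
    (hβ : ∀ (g : G) (u : M), β (g • u) = fun i => β u ((ρ g)⁻¹ i))
    (hβ' : ∀ (g : G) (u : M), β' (g • u) = fun i' => β' u ((ρ' g)⁻¹ i'))
    (α : G → G → G → M)
    (hα : ∀ g₁ g₂ g₃ g₄ : G,
      (g₁ • α g₂ g₃ g₄) * α g₁ (g₂ * g₃) g₄ * α g₁ g₂ g₃
        = α (g₁ * g₂) g₃ g₄ * α g₁ g₂ (g₃ * g₄))
    (c : G → G → Fin n → ℂˣ) (c' : G → G → Fin n' → ℂˣ)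
    (hc : ∀ (g₁ g₂ g₃ : G) (i : Fin n),
      c g₂ g₃ ((ρ g₁)⁻¹ i) * (c (g₁ * g₂) g₃ i)⁻¹ * c g₁ (g₂ * g₃) i * (c g₁ g₂ i)⁻¹
        = β (α g₁ g₂ g₃) i)
    (hc' : ∀ (g₁ g₂ g₃ : G) (i' : Fin n'),
      c' g₂ g₃ ((ρ' g₁)⁻¹ i') * (c' (g₁ * g₂) g₃ i')⁻¹ * c' g₁ (g₂ * g₃) i'
          * (c' g₁ g₂ i')⁻¹
        = β' (α g₁ g₂ g₃) i')
    (O : Set (Fin n' × Fin n))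
    (hOne : O.Nonempty)
    (hOcl : ∀ p ∈ O, ∀ g : G, ((ρ' g)⁻¹ p.1, (ρ g)⁻¹ p.2) ∈ O)
    (hOtr : ∀ p ∈ O, ∀ q ∈ O, ∃ g : G, q = ((ρ' g)⁻¹ p.1, (ρ g)⁻¹ p.2))
    (hOint : ∀ p ∈ O, ∀ u : M, β' u p.1 = β u p.2) :
    ∀ (g₁ g₂ g₃ : G), ∀ p ∈ O,
      (c' g₂ g₃ ((ρ' g₁)⁻¹ p.1) * (c g₂ g₃ ((ρ g₁)⁻¹ p.2))⁻¹)
          * (c' g₁ (g₂ * g₃) p.1 * (c g₁ (g₂ * g₃) p.2)⁻¹)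
        = (c' (g₁ * g₂) g₃ p.1 * (c (g₁ * g₂) g₃ p.2)⁻¹)
          * (c' g₁ g₂ p.1 * (c g₁ g₂ p.2)⁻¹) := by
  intro g₁ g₂ g₃ p hp
  have h : c' g₂ g₃ ((ρ' g₁)⁻¹ p.1) * (c' (g₁ * g₂) g₃ p.1)⁻¹ * c' g₁ (g₂ * g₃) p.1
      * (c' g₁ g₂ p.1)⁻¹
      = c g₂ g₃ ((ρ g₁)⁻¹ p.2) * (c (g₁ * g₂) g₃ p.2)⁻¹ * c g₁ (g₂ * g₃) p.2
        * (c g₁ g₂ p.2)⁻¹ :=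
    (hc' g₁ g₂ g₃ p.1).trans ((hOint p hp (α g₁ g₂ g₃)).trans (hc g₁ g₂ g₃ p.2).symm)
  ext
  have h' := congrArg (Units.val) h
  push_cast at h' ⊢
  field_simp at h' ⊢
  linear_combination h'
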